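/- arXiv:math/0510012 — 6 statements merged into one kernel-verified Lean document; each statement's English description precedes it below -/
import Mathlib

section
/- Let N ≥ 2, d ≥ 1, and let m : Fin N → ℝ be masses with mᵢ > 0 for all i. At every collision-free configuration q, the derivative of the Newtonian potential is nonzero: fderiv ℝ V q ≠ 0. (Consequently the Newtonian N-body equations have no equilibrium solutions.) -/
open scoped BigOperators

/-- The Newtonian potential of `N` bodies in `ℝ^d` with masses `m`,
on the configuration space `PiLp 2 (fun _ : Fin N => EuclideanSpace ℝ (Fin d))`
(the ℓ² inner-product space of configurations). -/
noncomputable def newtonV (N d : ℕ) (m : Fin N → ℝ)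
    (q : PiLp 2 (fun _ : Fin N => EuclideanSpace ℝ (Fin d))) : ℝ :=
  -∑ i : Fin N, ∑ j ∈ Finset.Ioi i, m i * m j / ‖q i - q j‖

/-!
The potential is homogeneous of degree `-1`, so Euler's identity gives `DV(q) q = -V(q)`, and
`-V(q) > 0` because every pair of distinct bodies contributes a positive term.
-/

open Finset

section Euler

variable {E F : Type*} [NormedAddCommGroup E] [NormedSpace ℝ E]
  [NormedAddCommGroup F] [NormedSpace ℝ F]

theorem fderiv_apply_self_of_smul_eq_rpow_smul {f : E → F} {x : E} {k : ℝ}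
    (hf : DifferentiableAt ℝ f x) (hhom : ∀ t : ℝ, 0 < t → f (t • x) = t ^ k • f x) :
    fderiv ℝ f x x = k • f x := by
  have hray : HasDerivAt (fun t : ℝ => t • x) x 1 := by
    simpa using (hasDerivAt_id (1 : ℝ)).smul_const x
  have hchain : HasDerivAt (fun t : ℝ => f (t • x)) (fderiv ℝ f x x) 1 := by
    rw [← one_smul ℝ x] at hf
    simpa [Function.comp_def] using hf.hasFDerivAt.comp_hasDerivAt (1 : ℝ) hray
  have hpow : HasDerivAt (fun t : ℝ => t ^ k • f x) (k • f x) 1 := by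
    simpa using
      (Real.hasDerivAt_rpow_const (x := 1) (p := k) (Or.inl one_ne_zero)).smul_const (f x)
  have heq : (fun t : ℝ => f (t • x)) =ᶠ[nhds 1] fun t => t ^ k • f x := by
    filter_upwards [eventually_gt_nhds one_pos] with t ht using hhom t ht
  exact hchain.unique (hpow.congr_of_eventuallyEq heq)

end Euler

section Newton

variable {N d : ℕ} {m : Fin N → ℝ} {q : PiLp 2 (fun _ : Fin N => EuclideanSpace ℝ (Fin d))}

theorem differentiableAt_newtonV (hq : ∀ i j : Fin N, i ≠ j → q i ≠ q j) :
    DifferentiableAt ℝ (newtonV N d m) q := by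
  refine (DifferentiableAt.fun_sum fun i _ => DifferentiableAt.fun_sum fun j hj => ?_).neg
  have hqij : q i - q j ≠ 0 := sub_ne_zero.mpr (hq i j (mem_Ioi.mp hj).ne)
  have hsub : DifferentiableAt ℝ (fun p : PiLp 2 (fun _ : Fin N => EuclideanSpace ℝ (Fin d)) =>
      p i - p j) q :=
    (PiLp.proj 2 _ i).differentiableAt.sub (PiLp.proj 2 _ j).differentiableAt
  simpa only [div_eq_mul_inv, Pi.inv_apply] using
    ((hsub.norm ℝ hqij).inv (norm_ne_zero_iff.mpr hqij)).const_mul (m i * m j)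

theorem newtonV_smul {t : ℝ} (ht : 0 < t) :
    newtonV N d m (t • q) = t⁻¹ * newtonV N d m q := by
  simp only [newtonV, mul_neg, mul_sum]
  congr 1
  refine sum_congr rfl fun i _ => sum_congr rfl fun j _ => ?_
  rw [PiLp.smul_apply, PiLp.smul_apply, ← smul_sub, norm_smul, Real.norm_of_nonneg ht.le]
  field_simp

theorem newtonV_neg (hN : 2 ≤ N) (hm : ∀ i, 0 < m i)
    (hq : ∀ i j : Fin N, i ≠ j → q i ≠ q j) : newtonV N d m q < 0 := by
  let i₀ : Fin N := ⟨0, by omega⟩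
  let i₁ : Fin N := ⟨1, by omega⟩
  have h01 : i₀ < i₁ := by simp [i₀, i₁, Fin.lt_def]
  have hterm : ∀ i, ∀ j ∈ Ioi i, 0 ≤ m i * m j / ‖q i - q j‖ := fun i j _ =>
    div_nonneg (mul_pos (hm i) (hm j)).le (norm_nonneg _)
  have hpair : 0 < m i₀ * m i₁ / ‖q i₀ - q i₁‖ :=
    div_pos (mul_pos (hm _) (hm _)) (norm_pos_iff.mpr (sub_ne_zero.mpr (hq _ _ h01.ne)))
  have hrow : 0 < ∑ j ∈ Ioi i₀, m i₀ * m j / ‖q i₀ - q j‖ :=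
    sum_pos' (hterm i₀) ⟨i₁, mem_Ioi.mpr h01, hpair⟩
  have hsum : 0 < ∑ i, ∑ j ∈ Ioi i, m i * m j / ‖q i - q j‖ :=
    hrow.trans_le (single_le_sum (fun i _ => sum_nonneg (hterm i)) (mem_univ i₀))
  simpa [newtonV] using hsum

end Newton

theorem newtonV_fderiv_ne_zero_general
    (N d : ℕ) (hN : 2 ≤ N)
    (m : Fin N → ℝ) (hm : ∀ i, 0 < m i)
    (q : PiLp 2 (fun _ : Fin N => EuclideanSpace ℝ (Fin d)))
    (hq : ∀ i j : Fin N, i ≠ j → q i ≠ q j) :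
    fderiv ℝ (newtonV N d m) q ≠ 0 := by
  have hV : newtonV N d m q < 0 := newtonV_neg hN hm hq
  have heuler : fderiv ℝ (newtonV N d m) q q = -newtonV N d m q := by
    simpa using fderiv_apply_self_of_smul_eq_rpow_smul (k := -1)
      (differentiableAt_newtonV (m := m) hq)
      fun t ht => by rw [newtonV_smul ht, Real.rpow_neg_one, smul_eq_mul]
  intro hzero
  rw [hzero, zero_apply] at heuler
  linarith

/-- At every collision-free configuration, the derivative of the Newtonian potential is
nonzero; consequently the Newtonian `N`-body equations have no equilibrium solutions. -/
theorem newtonV_fderiv_ne_zero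
    (N d : ℕ) (hN : 2 ≤ N) (hd : 1 ≤ d)
    (m : Fin N → ℝ) (hm : ∀ i, 0 < m i)
    (q : PiLp 2 (fun _ : Fin N => EuclideanSpace ℝ (Fin d)))
    (hq : ∀ i j : Fin N, i ≠ j → q i ≠ q j) :
    fderiv ℝ (newtonV N d m) q ≠ 0 :=
  newtonV_fderiv_ne_zero_general N d hN m hm q hq
end

section
/- Let n ≥ 1, let X : ℝⁿ → ℝⁿ and F : ℝⁿ → ℝ be C^∞, and let γ : ℝ → ℝⁿ be an integral curve of X on an open set s ⊆ ℝ. Then for every k ∈ ℕ and every t ∈ s, the k-th iterated derivative of F ∘ γ at t equals the k-th iterated Lie derivative of F with respect to X evaluated at γ(t): deriv^[k] (F ∘ γ) t = ((L_X)^[k] F)(γ(t)). -/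
/-- The Lie derivative of a function `F : ℝⁿ → ℝ` with respect to a vector field
`X : ℝⁿ → ℝⁿ`:  `(L_X F)(z) = (fderiv ℝ F z)(X z)`. -/
noncomputable def lieDeriv {n : ℕ} (X : (Fin n → ℝ) → (Fin n → ℝ))
    (F : (Fin n → ℝ) → ℝ) : (Fin n → ℝ) → ℝ :=
  fun z => fderiv ℝ F z (X z)

lemma lieDeriv_contDiff {n : ℕ} {X : (Fin n → ℝ) → (Fin n → ℝ)} (hX : ContDiff ℝ (⊤ : ℕ∞) X)
    {F : (Fin n → ℝ) → ℝ} (hF : ContDiff ℝ (⊤ : ℕ∞) F) : ContDiff ℝ (⊤ : ℕ∞) (lieDeriv X F) := by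
  exact (hF.fderiv_right (by simp)).clm_apply hX

lemma iterate_deriv_congr {f g : ℝ → ℝ} {t : ℝ} :
    ∀ (k : ℕ), f =ᶠ[nhds t] g → deriv^[k] f t = deriv^[k] g t := by
  intro k
  induction k generalizing f g with
  | zero => intro h; simpa using h.self_of_nhds
  | succ m ihm =>
    intro h
    rw [Function.iterate_succ_apply, Function.iterate_succ_apply]
    exact ihm h.deriv

/-- If `γ` is an integral curve of the smooth vector field `X` on the open set `s`,
then for every `k` and every `t ∈ s`, the `k`-th iterated derivative of `F ∘ γ` at `t`
equals the `k`-th iterated Lie derivative of `F` with respect to `X` at `γ t`. -/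
theorem iteratedDeriv_comp_eq_iter_lieDeriv
    {n : ℕ} (hn : 1 ≤ n)
    (X : (Fin n → ℝ) → (Fin n → ℝ)) (hX : ContDiff ℝ (⊤ : ℕ∞) X)
    (F : (Fin n → ℝ) → ℝ) (hF : ContDiff ℝ (⊤ : ℕ∞) F)
    (s : Set ℝ) (hs : IsOpen s)
    (γ : ℝ → (Fin n → ℝ)) (hγ : ∀ t ∈ s, HasDerivAt γ (X (γ t)) t) :
    ∀ (k : ℕ), ∀ t ∈ s, deriv^[k] (F ∘ γ) t = (lieDeriv X)^[k] F (γ t) := by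
  intro k
  induction k generalizing F with
  | zero => intro t _; simp
  | succ k ih =>
    intro t ht
    have hderiv : ∀ t' ∈ s, deriv (F ∘ γ) t' = (lieDeriv X F ∘ γ) t' := by
      intro t' ht'
      have h := ((hF.differentiable (by simp) (γ t')).hasFDerivAt).comp_hasDerivAt t' (hγ t' ht')
      exact h.deriv
    have hev : deriv (F ∘ γ) =ᶠ[nhds t] (lieDeriv X F ∘ γ) :=
      Filter.eventuallyEq_of_mem (hs.mem_nhds ht) hderiv
    have hiter : deriv^[k] (deriv (F ∘ γ)) t = deriv^[k] (lieDeriv X F ∘ γ) t :=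
      iterate_deriv_congr k hev
    rw [Function.iterate_succ_apply, hiter, Function.iterate_succ_apply]
    exact ih (lieDeriv X F) (lieDeriv_contDiff hX hF) t ht
end

section
/- The k-th derivative of F along a trajectory depends only on the k-jet of F at the initial point: let n ≥ 1, let X : ℝⁿ → ℝⁿ be C^∞, let z ∈ ℝⁿ, and let γ : ℝ → ℝⁿ be an integral curve of X on a neighbourhood of 0 with γ(0) = z. If F₁, F₂ : ℝⁿ → ℝ are C^∞ functions with iteratedFDeriv ℝ j F₁ z = iteratedFDeriv ℝ j F₂ z for all j ≤ k, then deriv^[k] (F₁ ∘ γ) 0 = deriv^[k] (F₂ ∘ γ) 0. -/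
open Filter Topology

/-- Iterated `deriv` at a point only depends on the germ. -/
lemma iter_deriv_congr_aux {f g : ℝ → ℝ} (k : ℕ) (h : f =ᶠ[nhds (0 : ℝ)] g) :
    deriv^[k] f 0 = deriv^[k] g 0 := by
  induction k generalizing f g with
  | zero => exact h.self_of_nhds
  | succ k ih =>
    rw [Function.iterate_succ_apply, Function.iterate_succ_apply]
    exact ih h.deriv

/-- The operator `F ↦ dF(X)`. -/
noncomputable def LopAux {n : ℕ} (X : (Fin n → ℝ) → (Fin n → ℝ))
    (F : (Fin n → ℝ) → ℝ) : (Fin n → ℝ) → ℝ :=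
  fun x => fderiv ℝ F x (X x)

lemma LopAux_contDiff {n : ℕ} {X : (Fin n → ℝ) → (Fin n → ℝ)} (hX : ContDiff ℝ (⊤ : ℕ∞) X)
    {F : (Fin n → ℝ) → ℝ} (hF : ContDiff ℝ (⊤ : ℕ∞) F) : ContDiff ℝ (⊤ : ℕ∞) (LopAux X F) :=
  (hF.fderiv_right (by simp)).clm_apply hX

/-- The derivative along the trajectory is given by `LopAux`. -/
lemma deriv_comp_eventually {n : ℕ} {X : (Fin n → ℝ) → (Fin n → ℝ)}
    {γ : ℝ → (Fin n → ℝ)} (hγ : ∀ᶠ t in nhds (0 : ℝ), HasDerivAt γ (X (γ t)) t)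
    {F : (Fin n → ℝ) → ℝ} (hF : ContDiff ℝ (⊤ : ℕ∞) F) :
    deriv (F ∘ γ) =ᶠ[nhds (0 : ℝ)] (LopAux X F) ∘ γ := by
  filter_upwards [hγ] with t ht
  exact (((hF.differentiable (by simp)) (γ t)).hasFDerivAt.comp_hasDerivAt t ht).deriv

lemma key_iterate {n : ℕ} {X : (Fin n → ℝ) → (Fin n → ℝ)} (hX : ContDiff ℝ (⊤ : ℕ∞) X)
    {γ : ℝ → (Fin n → ℝ)} (hγ : ∀ᶠ t in nhds (0 : ℝ), HasDerivAt γ (X (γ t)) t)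
    (k : ℕ) :
    ∀ F : (Fin n → ℝ) → ℝ, ContDiff ℝ (⊤ : ℕ∞) F →
      deriv^[k] (F ∘ γ) 0 = (LopAux X)^[k] F (γ 0) := by
  induction k with
  | zero => intro F hF; rfl
  | succ k ih =>
    intro F hF
    rw [Function.iterate_succ_apply, Function.iterate_succ_apply,
      iter_deriv_congr_aux k (deriv_comp_eventually hγ hF)]
    exact ih (LopAux X F) (LopAux_contDiff hX hF)

/-- If the jet of `G` vanishes up to order `k+1` at `z`, the jet of `LopAux X G`
vanishes up to order `k`. -/
lemma jet_step {n : ℕ} {X : (Fin n → ℝ) → (Fin n → ℝ)} (hX : ContDiff ℝ (⊤ : ℕ∞) X)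
    {G : (Fin n → ℝ) → ℝ} (hG : ContDiff ℝ (⊤ : ℕ∞) G) {z : Fin n → ℝ} {k : ℕ}
    (h : ∀ j ≤ k + 1, iteratedFDeriv ℝ j G z = 0) :
    ∀ j ≤ k, iteratedFDeriv ℝ j (LopAux X G) z = 0 := by
  intro j hj
  rw [← norm_eq_zero]
  have hbd := norm_iteratedFDeriv_clm_apply (f := fderiv ℝ G) (g := X)
    (hG.fderiv_right (m := (⊤ : ℕ∞)) (by simp)) hX z (n := j) (by exact_mod_cast (le_top : (j : ℕ∞) ≤ ⊤))
  have hzero : ∀ i ∈ Finset.range (j + 1),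
      (j.choose i : ℝ) * ‖iteratedFDeriv ℝ i (fderiv ℝ G) z‖ *
        ‖iteratedFDeriv ℝ (j - i) X z‖ = 0 := by
    intro i hi
    have : ‖iteratedFDeriv ℝ i (fderiv ℝ G) z‖ = 0 := by
      have hik : i ≤ j := Nat.lt_succ_iff.mp (Finset.mem_range.mp hi)
      rw [norm_iteratedFDeriv_fderiv, h (i + 1) (by omega), norm_zero]
    simp [this]
  rw [Finset.sum_congr rfl hzero, Finset.sum_const, smul_zero] at hbd
  exact le_antisymm hbd (norm_nonneg _)

lemma lop_iterate_vanish {n : ℕ} {X : (Fin n → ℝ) → (Fin n → ℝ)} (hX : ContDiff ℝ (⊤ : ℕ∞) X)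
    {z : Fin n → ℝ} (k : ℕ) :
    ∀ G : (Fin n → ℝ) → ℝ, ContDiff ℝ (⊤ : ℕ∞) G →
      (∀ j ≤ k, iteratedFDeriv ℝ j G z = 0) → (LopAux X)^[k] G z = 0 := by
  induction k with
  | zero =>
    intro G hG h
    have h0 := h 0 le_rfl
    have : G z = iteratedFDeriv ℝ 0 G z (fun _ => 0) := (iteratedFDeriv_zero_apply _).symm
    simp [Function.iterate_zero, this, h0]
  | succ k ih =>
    intro G hG h
    rw [Function.iterate_succ_apply]
    exact ih (LopAux X G) (LopAux_contDiff hX hG) (jet_step hX hG h)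

lemma lop_iterate_sub {n : ℕ} {X : (Fin n → ℝ) → (Fin n → ℝ)} (hX : ContDiff ℝ (⊤ : ℕ∞) X) (k : ℕ) :
    ∀ F₁ F₂ : (Fin n → ℝ) → ℝ, ContDiff ℝ (⊤ : ℕ∞) F₁ → ContDiff ℝ (⊤ : ℕ∞) F₂ →
      (LopAux X)^[k] (fun x => F₁ x - F₂ x) =
        fun x => (LopAux X)^[k] F₁ x - (LopAux X)^[k] F₂ x := by
  induction k with
  | zero => intro F₁ F₂ _ _; rfl
  | succ k ih =>
    intro F₁ F₂ h₁ h₂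
    rw [Function.iterate_succ_apply, Function.iterate_succ_apply,
      Function.iterate_succ_apply]
    have : LopAux X (fun x => F₁ x - F₂ x) =
        fun x => LopAux X F₁ x - LopAux X F₂ x := by
      funext x
      unfold LopAux
      rw [fderiv_fun_sub ((h₁.differentiable (by simp)) x) ((h₂.differentiable (by simp)) x)]
      simp
    rw [this]
    exact ih _ _ (LopAux_contDiff hX h₁) (LopAux_contDiff hX h₂)

/-- The `k`-th derivative of `F` along a trajectory of a smooth vector field depends
only on the `k`-jet of `F` at the initial point: if the iterated Fréchet derivatives of
`F₁` and `F₂` at `z = γ 0` agree up to order `k`, then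
`deriv^[k] (F₁ ∘ γ) 0 = deriv^[k] (F₂ ∘ γ) 0`. -/
theorem deriv_along_trajectory_depends_only_on_jet_of_F
    {n : ℕ} (hn : 1 ≤ n)
    (X : (Fin n → ℝ) → (Fin n → ℝ)) (hX : ContDiff ℝ (⊤ : ℕ∞) X)
    (z : Fin n → ℝ)
    (γ : ℝ → (Fin n → ℝ))
    (hγ : ∀ᶠ t in nhds (0 : ℝ), HasDerivAt γ (X (γ t)) t)
    (hγ0 : γ 0 = z)
    (k : ℕ) (F₁ F₂ : (Fin n → ℝ) → ℝ)
    (hF₁ : ContDiff ℝ (⊤ : ℕ∞) F₁) (hF₂ : ContDiff ℝ (⊤ : ℕ∞) F₂)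
    (hjet : ∀ j ≤ k, iteratedFDeriv ℝ j F₁ z = iteratedFDeriv ℝ j F₂ z) :
    deriv^[k] (F₁ ∘ γ) 0 = deriv^[k] (F₂ ∘ γ) 0 := by
  have h₁ := key_iterate hX hγ k F₁ hF₁
  have h₂ := key_iterate hX hγ k F₂ hF₂
  rw [h₁, h₂, hγ0]
  have hjetG : ∀ j ≤ k, iteratedFDeriv ℝ j (fun x => F₁ x - F₂ x) z = 0 := by
    intro j hj
    have heq : (fun x => F₁ x - F₂ x) = fun x => F₁ x + -F₂ x := by
      funext x; ring
    have e2 : iteratedFDeriv ℝ j (fun x => -F₂ x) z = -iteratedFDeriv ℝ j F₂ z :=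
      iteratedFDeriv_neg_apply
    rw [heq, iteratedFDeriv_add_apply' (hF₁.of_le (by exact_mod_cast le_top)).contDiffAt ((hF₂.of_le (by exact_mod_cast le_top)).neg.contDiffAt),
      e2, hjet j hj, add_neg_cancel]
  have := lop_iterate_vanish hX k (fun x => F₁ x - F₂ x) (hF₁.sub hF₂) hjetG
  have hsub := lop_iterate_sub hX k F₁ F₂ hF₁ hF₂
  rw [hsub] at this
  have h0 : (LopAux X)^[k] F₁ z - (LopAux X)^[k] F₂ z = 0 := this
  linarith
end

section
/- The k-th derivative of F along a trajectory depends only on the (k-1)-jet of the vector field at the initial point: let n ≥ 1, k ≥ 1, let F : ℝⁿ → ℝ be C^∞, let z ∈ ℝⁿ, and let X, Y : ℝⁿ → ℝⁿ be C^∞ vector fields with iteratedFDeriv ℝ j X z = iteratedFDeriv ℝ j Y z for all j ≤ k-1. If γ is an integral curve of X and δ is an integral curve of Y, each on a neighbourhood of 0 with γ(0) = δ(0) = z, then deriv^[k] (F ∘ γ) 0 = deriv^[k] (F ∘ δ) 0. -/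
open Filter Topology Function

section Jet

variable {E : Type*} [NormedAddCommGroup E] [NormedSpace ℝ E]

/-- The functions `f` and `g` have the same `m`-jet at `z`. -/
def JetEq (m : ℕ) {F : Type*} [NormedAddCommGroup F] [NormedSpace ℝ F]
    (f g : E → F) (z : E) : Prop :=
  ∀ j, j ≤ m → iteratedFDeriv ℝ j f z = iteratedFDeriv ℝ j g z

variable {F G : Type*} [NormedAddCommGroup F] [NormedSpace ℝ F]
  [NormedAddCommGroup G] [NormedSpace ℝ G]

theorem JetEq.mono {m m' : ℕ} {f g : E → F} {z : E} (h : JetEq m f g z) (hm : m' ≤ m) :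
    JetEq m' f g z := fun j hj => h j (hj.trans hm)

theorem JetEq.self_eq {m : ℕ} {f g : E → F} {z : E} (h : JetEq m f g z) : f z = g z := by
  have := h 0 (Nat.zero_le _)
  calc f z = iteratedFDeriv ℝ 0 f z 0 := (iteratedFDeriv_zero_apply _).symm
    _ = iteratedFDeriv ℝ 0 g z 0 := by rw [this]
    _ = g z := iteratedFDeriv_zero_apply _

theorem JetEq.fderiv {m : ℕ} {f g : E → F} {z : E} (h : JetEq (m + 1) f g z) :
    JetEq m (fderiv ℝ f) (fderiv ℝ g) z := by
  intro j hj
  have h' := h (j + 1) (by omega)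
  rw [iteratedFDeriv_succ_eq_comp_right, iteratedFDeriv_succ_eq_comp_right] at h'
  exact (continuousMultilinearCurryRightEquiv' ℝ j E F).symm.injective h'

theorem JetEq.of_fderiv {m : ℕ} {f g : E → F} {z : E} (hval : f z = g z)
    (h : JetEq m (_root_.fderiv ℝ f) (_root_.fderiv ℝ g) z) : JetEq (m + 1) f g z := by
  intro j hj
  match j with
  | 0 => ext x; simp [hval]
  | (i + 1) =>
    rw [iteratedFDeriv_succ_eq_comp_right, iteratedFDeriv_succ_eq_comp_right]
    simp only [Function.comp_apply]
    rw [h i (by omega)]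

theorem JetEq.clm_comp_left {m : ℕ} {f g : E → F} {z : E} (L : F →L[ℝ] G)
    (hf : ContDiff ℝ (⊤ : ℕ∞) f) (hg : ContDiff ℝ (⊤ : ℕ∞) g) (h : JetEq m f g z) :
    JetEq m (fun x => L (f x)) (fun x => L (g x)) z := by
  intro j hj
  rw [show (fun x => L (f x)) = L ∘ f from rfl, show (fun x => L (g x)) = L ∘ g from rfl,
    L.iteratedFDeriv_comp_left (x := z) hf.contDiffAt (by exact_mod_cast le_top), L.iteratedFDeriv_comp_left (x := z) hg.contDiffAt (by exact_mod_cast le_top), h j hj]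

theorem JetEq.add {m : ℕ} {f₁ f₂ g₁ g₂ : E → F} {z : E}
    (hf₁ : ContDiff ℝ (⊤ : ℕ∞) f₁) (hf₂ : ContDiff ℝ (⊤ : ℕ∞) f₂) (hg₁ : ContDiff ℝ (⊤ : ℕ∞) g₁)
    (hg₂ : ContDiff ℝ (⊤ : ℕ∞) g₂) (h₁ : JetEq m f₁ g₁ z) (h₂ : JetEq m f₂ g₂ z) :
    JetEq m (fun x => f₁ x + f₂ x) (fun x => g₁ x + g₂ x) z := by
  intro j hj
  rw [iteratedFDeriv_add_apply' (hf₁.contDiffAt.of_le (by exact_mod_cast le_top)) (hf₂.contDiffAt.of_le (by exact_mod_cast le_top)),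
    iteratedFDeriv_add_apply' (hg₁.contDiffAt.of_le (by exact_mod_cast le_top)) (hg₂.contDiffAt.of_le (by exact_mod_cast le_top)),
    h₁ j hj, h₂ j hj]

end Jet

theorem jetEq_clm_apply {E : Type} [NormedAddCommGroup E] [NormedSpace ℝ E] (m : ℕ) :
    ∀ {F G : Type} [NormedAddCommGroup F] [NormedSpace ℝ F] [NormedAddCommGroup G]
      [NormedSpace ℝ G] (c c' : E → F →L[ℝ] G) (u u' : E → F) (z : E),
      ContDiff ℝ (⊤ : ℕ∞) c → ContDiff ℝ (⊤ : ℕ∞) c' → ContDiff ℝ (⊤ : ℕ∞) u → ContDiff ℝ (⊤ : ℕ∞) u' →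
      JetEq m c c' z → JetEq m u u' z →
      JetEq m (fun x => c x (u x)) (fun x => c' x (u' x)) z := by
  induction m with
  | zero =>
    intro F G _ _ _ _ c c' u u' z _ _ _ _ hc hu j hj
    interval_cases j
    ext x
    simp [hc.self_eq, hu.self_eq]
  | succ m ih =>
    intro F G _ _ _ _ c c' u u' z hc hc' hu hu' hjc hju
    obtain ⟨flipCLM, hflipapp⟩ :
        ∃ L : (E →L[ℝ] F →L[ℝ] G) →L[ℝ] (F →L[ℝ] E →L[ℝ] G),
          ∀ A : E →L[ℝ] F →L[ℝ] G, L A = A.flip :=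
      ⟨(ContinuousLinearMap.flipₗᵢ ℝ E F G).toLinearIsometry.toContinuousLinearMap,
        fun A => rfl⟩
    have hdc : ContDiff ℝ (⊤ : ℕ∞) (fderiv ℝ c) := hc.fderiv_right (by simp)
    have hdc' : ContDiff ℝ (⊤ : ℕ∞) (fderiv ℝ c') := hc'.fderiv_right (by simp)
    have hdu : ContDiff ℝ (⊤ : ℕ∞) (fderiv ℝ u) := hu.fderiv_right (by simp)
    have hdu' : ContDiff ℝ (⊤ : ℕ∞) (fderiv ℝ u') := hu'.fderiv_right (by simp)
    obtain ⟨compCLM, hcompapp⟩ :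
        ∃ L : (F →L[ℝ] G) →L[ℝ] (E →L[ℝ] F) →L[ℝ] (E →L[ℝ] G),
          ∀ (A : F →L[ℝ] G) (B : E →L[ℝ] F), L A B = A.comp B :=
      ⟨ContinuousLinearMap.compL ℝ E F G, fun A B => rfl⟩
    -- the two terms of the Leibniz formula
    have hcc : ContDiff ℝ (⊤ : ℕ∞) (fun x => compCLM (c x)) := contDiff_const.clm_apply hc
    have hcc' : ContDiff ℝ (⊤ : ℕ∞) (fun x => compCLM (c' x)) := contDiff_const.clm_apply hc'
    have hfc : ContDiff ℝ (⊤ : ℕ∞) (fun x => flipCLM (fderiv ℝ c x)) := contDiff_const.clm_apply hdc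
    have hfc' : ContDiff ℝ (⊤ : ℕ∞) (fun x => flipCLM (fderiv ℝ c' x)) := contDiff_const.clm_apply hdc'
    have hT1 : ContDiff ℝ (⊤ : ℕ∞) (fun x => (compCLM (c x)) (fderiv ℝ u x)) := hcc.clm_apply hdu
    have hT1' : ContDiff ℝ (⊤ : ℕ∞) (fun x => (compCLM (c' x)) (fderiv ℝ u' x)) := hcc'.clm_apply hdu'
    have hT2 : ContDiff ℝ (⊤ : ℕ∞) (fun x => (flipCLM (fderiv ℝ c x)) (u x)) := hfc.clm_apply hu
    have hT2' : ContDiff ℝ (⊤ : ℕ∞) (fun x => (flipCLM (fderiv ℝ c' x)) (u' x)) := hfc'.clm_apply hu'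
    have hfd : fderiv ℝ (fun x => c x (u x)) =
        fun x => (compCLM (c x)) (fderiv ℝ u x) + (flipCLM (fderiv ℝ c x)) (u x) := by
      funext x
      rw [fderiv_clm_apply (hc.differentiable (by simp) x) (hu.differentiable (by simp) x),
        hcompapp, hflipapp]
    have hfd' : fderiv ℝ (fun x => c' x (u' x)) =
        fun x => (compCLM (c' x)) (fderiv ℝ u' x) + (flipCLM (fderiv ℝ c' x)) (u' x) := by
      funext x
      rw [fderiv_clm_apply (hc'.differentiable (by simp) x) (hu'.differentiable (by simp) x),
        hcompapp, hflipapp]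
    -- jets of the two terms agree up to order m
    have jc1 : JetEq m (fun x => compCLM (c x)) (fun x => compCLM (c' x)) z :=
      JetEq.clm_comp_left (F := F →L[ℝ] G) (G := (E →L[ℝ] F) →L[ℝ] (E →L[ℝ] G))
        (f := c) (g := c') (z := z) compCLM hc hc' (hjc.mono (Nat.le_succ m))
    have jc2 : JetEq m (fun x => flipCLM (fderiv ℝ c x)) (fun x => flipCLM (fderiv ℝ c' x)) z :=
      JetEq.clm_comp_left (F := E →L[ℝ] F →L[ℝ] G) (G := F →L[ℝ] E →L[ℝ] G)
        (f := fderiv ℝ c) (g := fderiv ℝ c') (z := z) flipCLM hdc hdc' hjc.fderiv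
    have j1 : JetEq m (fun x => (compCLM (c x)) (fderiv ℝ u x))
        (fun x => (compCLM (c' x)) (fderiv ℝ u' x)) z :=
      ih (fun x => compCLM (c x)) (fun x => compCLM (c' x)) (fderiv ℝ u) (fderiv ℝ u') z
        hcc hcc' hdu hdu' jc1 hju.fderiv
    have j2 : JetEq m (fun x => (flipCLM (fderiv ℝ c x)) (u x))
        (fun x => (flipCLM (fderiv ℝ c' x)) (u' x)) z :=
      ih (fun x => flipCLM (fderiv ℝ c x)) (fun x => flipCLM (fderiv ℝ c' x)) u u' z
        hfc hfc' hu hu' jc2 (hju.mono (Nat.le_succ m))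
    refine JetEq.of_fderiv ?_ ?_
    · rw [hjc.self_eq, hju.self_eq]
    · rw [hfd, hfd']
      exact JetEq.add hT1 hT2 hT1' hT2' j1 j2


section Lie

variable {E : Type} [NormedAddCommGroup E] [NormedSpace ℝ E]

/-- Derivative of `G` along the vector field `X`. -/
noncomputable def lieD (X : E → E) (G : E → ℝ) : E → ℝ :=
  fun x => fderiv ℝ G x (X x)

theorem lieD_contDiff {X : E → E} {G : E → ℝ} (hX : ContDiff ℝ (⊤ : ℕ∞) X)
    (hG : ContDiff ℝ (⊤ : ℕ∞) G) : ContDiff ℝ (⊤ : ℕ∞) (lieD X G) :=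
  (hG.fderiv_right (by simp)).clm_apply hX

theorem lieD_iter_contDiff {X : E → E} {G : E → ℝ} (hX : ContDiff ℝ (⊤ : ℕ∞) X)
    (hG : ContDiff ℝ (⊤ : ℕ∞) G) (j : ℕ) : ContDiff ℝ (⊤ : ℕ∞) ((lieD X)^[j] G) := by
  induction j with
  | zero => exact hG
  | succ j ih => rw [Function.iterate_succ_apply']; exact lieD_contDiff hX ih

theorem jetEq_lieD_iter (k : ℕ) {X Y : E → E} {F : E → ℝ} {z : E}
    (hX : ContDiff ℝ (⊤ : ℕ∞) X) (hY : ContDiff ℝ (⊤ : ℕ∞) Y) (hF : ContDiff ℝ (⊤ : ℕ∞) F)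
    (hXY : JetEq (k - 1) X Y z) :
    ∀ j, j ≤ k → JetEq (k - j) ((lieD X)^[j] F) ((lieD Y)^[j] F) z := by
  intro j
  induction j with
  | zero => exact fun _ _ _ => rfl
  | succ j ih =>
    intro hjk
    have hGH := ih (by omega)
    have harith : k - j = (k - (j + 1)) + 1 := by omega
    rw [harith] at hGH
    rw [Function.iterate_succ_apply', Function.iterate_succ_apply']
    have hG := lieD_iter_contDiff hX hF j
    have hH := lieD_iter_contDiff hY hF j
    exact jetEq_clm_apply (k - (j + 1)) (fderiv ℝ ((lieD X)^[j] F)) (fderiv ℝ ((lieD Y)^[j] F))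
      X Y z (hG.fderiv_right (by simp)) (hH.fderiv_right (by simp)) hX hY
      hGH.fderiv (hXY.mono (by omega))

theorem deriv_iter_traj {X : E → E} {F : E → ℝ} (hX : ContDiff ℝ (⊤ : ℕ∞) X)
    (hF : ContDiff ℝ (⊤ : ℕ∞) F) {γ : ℝ → E}
    (hγ : ∀ᶠ t in nhds (0 : ℝ), HasDerivAt γ (X (γ t)) t) (j : ℕ) :
    ∀ᶠ t in nhds (0 : ℝ), deriv^[j] (F ∘ γ) t = ((lieD X)^[j] F) (γ t) := by
  induction j with
  | zero => exact Filter.Eventually.of_forall fun t => rfl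
  | succ j ih =>
    filter_upwards [ih.eventually_nhds, hγ] with t ht hder
    have h1 : deriv (deriv^[j] (F ∘ γ)) t = deriv (fun s => ((lieD X)^[j] F) (γ s)) t :=
      Filter.EventuallyEq.deriv_eq ht
    have h2 : HasDerivAt (fun s => ((lieD X)^[j] F) (γ s))
        (fderiv ℝ ((lieD X)^[j] F) (γ t) (X (γ t))) t :=
      (((lieD_iter_contDiff hX hF j).differentiable (by simp) (γ t)).hasFDerivAt).comp_hasDerivAt
        t hder
    rw [Function.iterate_succ_apply', h1, h2.deriv, Function.iterate_succ_apply']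
    rfl

end Lie

/-- The `k`-th derivative of `F` along a trajectory depends only on the `(k-1)`-jet of
the vector field at the initial point: if the iterated Fréchet derivatives of the smooth
vector fields `X` and `Y` at `z` agree up to order `k - 1`, and `γ`, `δ` are integral
curves of `X`, `Y` respectively near `0` with `γ 0 = δ 0 = z`, then
`deriv^[k] (F ∘ γ) 0 = deriv^[k] (F ∘ δ) 0`. -/
theorem deriv_along_trajectory_depends_only_on_jet_of_X
    {n : ℕ} (hn : 1 ≤ n)
    (k : ℕ) (hk : 1 ≤ k)
    (F : (Fin n → ℝ) → ℝ) (hF : ContDiff ℝ (⊤ : ℕ∞) F)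
    (z : Fin n → ℝ)
    (X Y : (Fin n → ℝ) → (Fin n → ℝ))
    (hX : ContDiff ℝ (⊤ : ℕ∞) X) (hY : ContDiff ℝ (⊤ : ℕ∞) Y)
    (hjet : ∀ j ≤ k - 1, iteratedFDeriv ℝ j X z = iteratedFDeriv ℝ j Y z)
    (γ δ : ℝ → (Fin n → ℝ))
    (hγ : ∀ᶠ t in nhds (0 : ℝ), HasDerivAt γ (X (γ t)) t)
    (hδ : ∀ᶠ t in nhds (0 : ℝ), HasDerivAt δ (Y (δ t)) t)
    (hγ0 : γ 0 = z) (hδ0 : δ 0 = z) :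
    deriv^[k] (F ∘ γ) 0 = deriv^[k] (F ∘ δ) 0 := by
  have hXY : JetEq (k - 1) X Y z := fun j hj => hjet j hj
  have hγk : deriv^[k] (F ∘ γ) 0 = ((lieD X)^[k] F) z := by
    have := (deriv_iter_traj hX hF hγ k).self_of_nhds
    rwa [hγ0] at this
  have hδk : deriv^[k] (F ∘ δ) 0 = ((lieD Y)^[k] F) z := by
    have := (deriv_iter_traj hY hF hδ k).self_of_nhds
    rwa [hδ0] at this
  have hmain : ((lieD X)^[k] F) z = ((lieD Y)^[k] F) z :=
    (jetEq_lieD_iter k hX hY hF hXY k le_rfl).self_eq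
  rw [hγk, hδk, hmain]
end

section
/- Prescribing derivatives of a conserved-quantity candidate along a trajectory (core of the genericity theorem for functions F): let n ≥ 1, let X : ℝⁿ → ℝⁿ be C^∞, let z ∈ ℝⁿ with X(z) ≠ 0, and let γ : ℝ → ℝⁿ be an integral curve of X on a neighbourhood of 0 with γ(0) = z. Then for every m ≥ 1 and every prescribed values v₁, …, v_m ∈ ℝ, there exists a C^∞ function F : ℝⁿ → ℝ such that deriv^[k] (F ∘ γ) 0 = v_k for all k with 1 ≤ k ≤ m. -/
open Filter
open scoped ContDiff

/-- Iterated derivative at a point only depends on the germ. -/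
lemma iterDeriv_congr {f g : ℝ → ℝ} {x : ℝ} (h : f =ᶠ[nhds x] g) :
    ∀ k, deriv^[k] f x = deriv^[k] g x := by
  intro k
  induction k generalizing f g with
  | zero => exact h.self_of_nhds
  | succ k ih =>
    rw [Function.iterate_succ_apply, Function.iterate_succ_apply]
    exact ih h.deriv

lemma deriv_contDiffOn {f : ℝ → ℝ} {s : Set ℝ} (hs : IsOpen s)
    (hf : ContDiffOn ℝ ∞ f s) : ContDiffOn ℝ ∞ (deriv f) s :=
  ((contDiffOn_infty_iff_deriv_of_isOpen hs).1 hf).2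

lemma diffAt_of_contDiffOn {f : ℝ → ℝ} {s : Set ℝ} (hs : IsOpen s)
    (hf : ContDiffOn ℝ ∞ f s) {t : ℝ} (ht : t ∈ s) : DifferentiableAt ℝ f t :=
  ((hf t ht).differentiableWithinAt (by norm_num)).differentiableAt (hs.mem_nhds ht)

lemma iterDeriv_const_mul {f : ℝ → ℝ} {s : Set ℝ} (hs : IsOpen s) (h0 : (0:ℝ) ∈ s)
    (hf : ContDiffOn ℝ ∞ f s) (c : ℝ) :
    ∀ k, deriv^[k] (fun t => c * f t) 0 = c * deriv^[k] f 0 := by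
  intro k
  induction k generalizing f with
  | zero => simp
  | succ k ih =>
    rw [Function.iterate_succ_apply, Function.iterate_succ_apply]
    have hev : deriv (fun t => c * f t) =ᶠ[nhds (0:ℝ)] fun t => c * deriv f t := by
      filter_upwards [hs.mem_nhds h0] with t ht
      exact deriv_const_mul c (diffAt_of_contDiffOn hs hf ht)
    rw [iterDeriv_congr hev k]
    exact ih (deriv_contDiffOn hs hf)

lemma iterDeriv_sum {N : ℕ} {fs : Fin N → ℝ → ℝ} {s : Set ℝ} (hs : IsOpen s) (h0 : (0:ℝ) ∈ s)
    (hf : ∀ p, ContDiffOn ℝ ∞ (fs p) s) :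
    ∀ k, deriv^[k] (fun t => ∑ p, fs p t) 0 = ∑ p, deriv^[k] (fs p) 0 := by
  intro k
  induction k generalizing fs with
  | zero => simp
  | succ k ih =>
    rw [Function.iterate_succ_apply]
    have hev : deriv (fun t => ∑ p, fs p t) =ᶠ[nhds (0:ℝ)] fun t => ∑ p, deriv (fs p) t := by
      filter_upwards [hs.mem_nhds h0] with t ht
      exact deriv_fun_sum fun p _ => diffAt_of_contDiffOn hs (hf p) ht
    rw [iterDeriv_congr hev k]
    have := ih (fs := fun p => deriv (fs p)) (fun p => deriv_contDiffOn hs (hf p))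
    rw [this]
    exact Finset.sum_congr rfl fun p _ => by rw [Function.iterate_succ_apply]

lemma keyL {u : ℝ → ℝ} {su : Set ℝ} (hsu : IsOpen su) (h0u : (0:ℝ) ∈ su)
    (hu : ContDiffOn ℝ ∞ u su) (hu0 : u 0 = 0) {d : ℝ} (hd : deriv u 0 = d) :
    ∀ k j (v : ℝ → ℝ) (sv : Set ℝ), IsOpen sv → (0:ℝ) ∈ sv → ContDiffOn ℝ ∞ v sv → k ≤ j →
      deriv^[k] (fun t => v t * u t ^ j) 0 =
        if k = j then (k.factorial : ℝ) * d ^ k * v 0 else 0 := by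
  intro k
  induction k with
  | zero =>
    intro j v sv _ _ _ _
    simp only [Function.iterate_zero, id_eq]
    cases j with
    | zero => simp
    | succ j => simp [hu0, Nat.succ_ne_zero]
  | succ k ih =>
    intro j v sv hsv h0v hv hkj
    obtain ⟨j, rfl⟩ : ∃ j', j = j' + 1 := by
      cases j with
      | zero => omega
      | succ j => exact ⟨j, rfl⟩
    rw [Function.iterate_succ_apply]
    set w : ℝ → ℝ := fun t => deriv v t * u t + ((j:ℝ) + 1) * v t * deriv u t with hw
    have hev : deriv (fun t => v t * u t ^ (j + 1)) =ᶠ[nhds (0:ℝ)]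
        fun t => w t * u t ^ j := by
      filter_upwards [hsu.mem_nhds h0u, hsv.mem_nhds h0v] with t htu htv
      have hdu := diffAt_of_contDiffOn hsu hu htu
      have hdv := diffAt_of_contDiffOn hsv hv htv
      rw [deriv_fun_mul hdv (hdu.fun_pow _), deriv_fun_pow hdu _]
      simp only [hw, Nat.add_sub_cancel, Nat.cast_add, Nat.cast_one]
      ring
    rw [iterDeriv_congr hev k]
    have hw' : ContDiffOn ℝ ∞ w (su ∩ sv) := by
      apply ContDiffOn.add
      · exact (((deriv_contDiffOn hsv hv).mono Set.inter_subset_right).mul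
          (hu.mono Set.inter_subset_left))
      · exact ((contDiffOn_const.mul (hv.mono Set.inter_subset_right)).mul
          ((deriv_contDiffOn hsu hu).mono Set.inter_subset_left))
    have := ih j w (su ∩ sv) (hsu.inter hsv) ⟨h0u, h0v⟩ hw' (by omega)
    rw [this]
    have hw0 : w 0 = ((j:ℝ) + 1) * v 0 * d := by simp [hw, hu0, hd]
    by_cases hkj' : k = j
    · subst hkj'
      simp only [if_pos rfl, hw0, Nat.factorial_succ]
      push_cast
      ring
    · simp [hkj', fun h => hkj' (Nat.succ_injective h)]

/-- **Prescribing derivatives of a conserved-quantity candidate along a trajectory**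
(core of the genericity theorem for functions `F`): if `X` is a smooth vector field with
`X z ≠ 0` and `γ` is an integral curve of `X` near `0` with `γ 0 = z`, then for every
`m ≥ 1` and prescribed values `v 1, …, v m`, there is a smooth function `F : ℝⁿ → ℝ`
with `deriv^[k] (F ∘ γ) 0 = v k` for all `1 ≤ k ≤ m`. -/
theorem exists_smooth_F_with_prescribed_derivs_along_trajectory
    {n : ℕ} (hn : 1 ≤ n)
    (X : (Fin n → ℝ) → (Fin n → ℝ)) (hX : ContDiff ℝ (⊤ : ℕ∞) X)
    (z : Fin n → ℝ) (hz : X z ≠ 0)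
    (γ : ℝ → (Fin n → ℝ))
    (hγ : ∀ᶠ t in nhds (0 : ℝ), HasDerivAt γ (X (γ t)) t)
    (hγ0 : γ 0 = z)
    (m : ℕ) (hm : 1 ≤ m) (v : ℕ → ℝ) :
    ∃ F : (Fin n → ℝ) → ℝ, ContDiff ℝ (⊤ : ℕ∞) F ∧
      ∀ k, 1 ≤ k → k ≤ m → deriv^[k] (F ∘ γ) 0 = v k := by
  -- pick a coordinate where X z ≠ 0
  obtain ⟨i, hi⟩ : ∃ i, X z i ≠ 0 := Function.ne_iff.mp hz
  -- open set where the ODE holds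
  obtain ⟨s, hsP, hs_open, h0s⟩ := eventually_nhds_iff.mp hγ
  -- γ is smooth on s
  have hγsm : ContDiffOn ℝ ∞ γ s := by
    rw [contDiffOn_infty]
    intro K
    induction K with
    | zero =>
      rw [show ((0:ℕ) : WithTop ℕ∞) = 0 by norm_cast, contDiffOn_zero]
      exact fun t ht => ((hsP t ht).differentiableAt.continuousAt).continuousWithinAt
    | succ K ihK =>
      have : ((K+1 : ℕ) : WithTop ℕ∞) = (K : WithTop ℕ∞) + 1 := by push_cast; rfl
      rw [this, contDiffOn_succ_iff_deriv_of_isOpen hs_open]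
      refine ⟨fun t ht => ((hsP t ht).differentiableAt).differentiableWithinAt, ?_, ?_⟩
      · intro h; simp at h
      · refine (ContDiff.comp_contDiffOn (hX.of_le (by exact_mod_cast le_top)) ihK).congr ?_
        exact fun t ht => (hsP t ht).deriv
  -- the scalar function u
  set u : ℝ → ℝ := fun t => γ t i - z i with hu_def
  have hu : ContDiffOn ℝ ∞ u s :=
    ((ContinuousLinearMap.proj (R := ℝ) (φ := fun _ : Fin n => ℝ) i).contDiff.comp_contDiffOn
      hγsm).sub contDiffOn_const
  have hu0 : u 0 = 0 := by simp [hu_def, hγ0]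
  set d : ℝ := X z i with hd_def
  have hder : HasDerivAt u d 0 := by
    have h1 : HasDerivAt (fun t => γ t i) (X (γ 0) i) 0 :=
      hasDerivAt_pi.mp (hγ.self_of_nhds) i
    rw [hγ0] at h1
    exact h1.sub_const _
  have hd : deriv u 0 = d := hder.deriv
  -- iterated derivatives of powers of u
  set M : ℕ → ℕ → ℝ := fun k j => deriv^[k] (fun t => u t ^ j) 0 with hM_def
  have hMval : ∀ k j, k ≤ j →
      M k j = if k = j then (k.factorial : ℝ) * d ^ k else 0 := by
    intro k j hkj
    have := keyL hs_open h0s hu hu0 hd k j (fun _ => (1:ℝ)) Set.univ isOpen_univ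
      (Set.mem_univ _) contDiffOn_const hkj
    simp only [one_mul, mul_one] at this
    simpa using this
  -- the triangular matrix
  set A : Matrix (Fin m) (Fin m) ℝ := Matrix.of fun p q => M ((p:ℕ)+1) ((q:ℕ)+1) with hA_def
  have hAtri : ∀ p q : Fin m, (p:ℕ) < (q:ℕ) → A p q = 0 := by
    intro p q hpq
    have := hMval ((p:ℕ)+1) ((q:ℕ)+1) (by omega)
    simp only [hA_def, Matrix.of_apply, this, if_neg (by omega : ¬ (p:ℕ)+1 = (q:ℕ)+1)]
  have hAdiag : ∀ p : Fin m, A p p = (((p:ℕ)+1).factorial : ℝ) * d ^ ((p:ℕ)+1) := by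
    intro p
    have := hMval ((p:ℕ)+1) ((p:ℕ)+1) le_rfl
    simp [hA_def, this]
  have hdet : IsUnit A.det := by
    have htr : A.BlockTriangular OrderDual.toDual := by
      intro p q h
      exact hAtri p q (by exact_mod_cast h)
    rw [Matrix.det_of_lowerTriangular A htr]
    refine (Finset.prod_ne_zero_iff.mpr fun p _ => ?_).isUnit
    rw [hAdiag p]
    exact mul_ne_zero (Nat.cast_ne_zero.mpr (Nat.factorial_ne_zero _)) (pow_ne_zero _ hi)
  -- solve the triangular system
  set w : Fin m → ℝ := fun p => v ((p:ℕ)+1) with hw_def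
  set a : Fin m → ℝ := A⁻¹.mulVec w with ha_def
  have hsolve : A.mulVec a = w := by
    rw [ha_def, Matrix.mulVec_mulVec, Matrix.mul_nonsing_inv A hdet, Matrix.one_mulVec]
  -- the candidate function
  refine ⟨fun x => ∑ p : Fin m, a p * (x i - z i) ^ ((p:ℕ)+1), ?_, ?_⟩
  · refine ContDiff.sum fun p _ => ?_
    exact contDiff_const.mul
      (((ContinuousLinearMap.proj (R := ℝ) (φ := fun _ : Fin n => ℝ) i).contDiff.sub
        contDiff_const).pow _)
  · intro k hk1 hkm
    have hcomp : ((fun x => ∑ p : Fin m, a p * (x i - z i) ^ ((p:ℕ)+1)) ∘ γ)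
        = fun t => ∑ p : Fin m, a p * u t ^ ((p:ℕ)+1) := rfl
    rw [hcomp]
    have hsummands : ∀ p : Fin m, ContDiffOn ℝ ∞ (fun t => a p * u t ^ ((p:ℕ)+1)) s :=
      fun p => contDiffOn_const.mul (hu.pow _)
    rw [iterDeriv_sum hs_open h0s hsummands k]
    have hterm : ∀ p : Fin m, deriv^[k] (fun t => a p * u t ^ ((p:ℕ)+1)) 0
        = a p * M k ((p:ℕ)+1) := by
      intro p
      exact iterDeriv_const_mul hs_open h0s (hu.pow _) (a p) k
    simp only [hterm]
    set p0 : Fin m := ⟨k-1, by omega⟩ with hp0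
    have hk' : (p0:ℕ)+1 = k := by simp only [hp0]; omega
    calc ∑ p : Fin m, a p * M k ((p:ℕ)+1) = ∑ p : Fin m, A p0 p * a p := by
          refine Finset.sum_congr rfl fun p _ => ?_
          simp only [hA_def, Matrix.of_apply, hk']
          ring
      _ = A.mulVec a p0 := by simp [Matrix.mulVec, dotProduct]
      _ = w p0 := by rw [hsolve]
      _ = v k := by simp only [hw_def, hk']
end

section
/- Prescribing derivatives of a fixed function along trajectories of a constructed Hamiltonian vector field (core of the genericity theorem for Hamiltonians): let n ≥ 1, work on the phase space ℝⁿ × ℝⁿ with the standard symplectic structure, let F : ℝⁿ × ℝⁿ → ℝ be C^∞, and let z₀ ∈ ℝⁿ × ℝⁿ with fderiv ℝ F z₀ ≠ 0. Then for every m ≥ 1 and every prescribed values v₁, …, v_m ∈ ℝ, there exists a C^∞ function H : ℝⁿ × ℝⁿ → ℝ such that the Hamiltonian vector field X_H satisfies X_H(z₀) ≠ 0, and every integral curve γ of X_H on a neighbourhood of 0 with γ(0) = z₀ satisfies deriv^[k] (F ∘ γ) 0 = v_k for all k with 1 ≤ k ≤ m. -/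
open ContDiff

noncomputable def dotL {n : ℕ} (w : (Fin n → ℝ) × (Fin n → ℝ)) :
    ((Fin n → ℝ) × (Fin n → ℝ)) →L[ℝ] ℝ :=
  LinearMap.toContinuousLinearMap
  { toFun := fun z => (∑ i, w.1 i * z.1 i) + ∑ i, w.2 i * z.2 i
    map_add' := by intro a b; simp [mul_add, Finset.sum_add_distrib]; ring
    map_smul' := by
      intro r a
      simp only [Prod.smul_fst, Prod.smul_snd, Pi.smul_apply, smul_eq_mul, RingHom.id_apply,
        Finset.mul_sum, mul_add]
      congr 1 <;> exact Finset.sum_congr rfl fun i _ => by ring }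

lemma dotL_apply {n : ℕ} (w z : (Fin n → ℝ) × (Fin n → ℝ)) :
    dotL w z = (∑ i, w.1 i * z.1 i) + ∑ i, w.2 i * z.2 i := rfl

lemma dotL_single1 {n : ℕ} (w : (Fin n → ℝ) × (Fin n → ℝ)) (i : Fin n) :
    dotL w (Pi.single i 1, 0) = w.1 i := by
  simp [dotL_apply, Pi.single_apply, mul_ite, Finset.sum_ite_eq']

lemma dotL_single2 {n : ℕ} (w : (Fin n → ℝ) × (Fin n → ℝ)) (i : Fin n) :
    dotL w (0, Pi.single i 1) = w.2 i := by
  simp [dotL_apply, Pi.single_apply, mul_ite, Finset.sum_ite_eq']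

private lemma const_of_deriv0_ball {E : Type*} [NormedAddCommGroup E] [NormedSpace ℝ E]
    {f : ℝ → E} {ε : ℝ} (hε : 0 < ε) (hf : ∀ t ∈ Metric.ball (0:ℝ) ε, HasDerivAt f 0 t)
    {t : ℝ} (ht : t ∈ Metric.ball (0:ℝ) ε) : f t = f 0 := by
  apply (convex_ball (0:ℝ) ε).is_const_of_fderivWithin_eq_zero
    (fun x hx => ((hf x hx).differentiableAt).differentiableWithinAt) ?_ ht
    (Metric.mem_ball_self hε)
  intro x hx
  rw [fderivWithin_of_isOpen Metric.isOpen_ball hx]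
  have h : HasFDerivAt f (0 : ℝ →L[ℝ] E) x := by
    exact (hf x hx).hasFDerivAt.congr_fderiv (by ext; simp)
  exact h.fderiv

lemma iter_deriv_congr {x : ℝ} : ∀ (k : ℕ) {f g : ℝ → ℝ}, f =ᶠ[nhds x] g →
    deriv^[k] f x = deriv^[k] g x := by
  intro k
  induction k with
  | zero => intro f g h; exact h.eq_of_nhds
  | succ k ih =>
    intro f g h
    rw [Function.iterate_succ_apply, Function.iterate_succ_apply]
    exact ih h.deriv

lemma aux_pow_mul : ∀ (j : ℕ) (u : ℝ → ℝ), ContDiff ℝ ∞ u →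
    (∀ k, k < j → deriv^[k] (fun t => t ^ j * u t) 0 = 0) ∧
    deriv^[j] (fun t => t ^ j * u t) 0 = (j.factorial : ℝ) * u 0 := by
  intro j
  induction j with
  | zero => intro u hu; exact ⟨fun k hk => absurd hk (Nat.not_lt_zero k), by simp⟩
  | succ j ih =>
    intro u hu
    have hu' : Differentiable ℝ u := hu.differentiable (by norm_num)
    have hderiv : deriv (fun t => t ^ (j+1) * u t) =
        fun t => t ^ j * (((j:ℝ)+1) * u t + t * deriv u t) := by
      funext t
      have h1 : HasDerivAt (fun x : ℝ => x ^ (j+1) * u x)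
          (((j:ℝ)+1) * t ^ j * u t + t ^ (j+1) * deriv u t) t := by
        have := (hasDerivAt_pow (j+1) t).mul (hu' t).hasDerivAt
        simp at this; exact this
      rw [h1.deriv]; ring
    set w : ℝ → ℝ := fun t => ((j:ℝ)+1) * u t + t * deriv u t with hw
    have hwc : ContDiff ℝ ∞ w := by
      have : ContDiff ℝ ∞ (deriv u) := (contDiff_infty_iff_deriv.mp hu).2
      exact (contDiff_const.mul hu).add (contDiff_id.mul this)
    obtain ⟨ih1, ih2⟩ := ih w hwc
    constructor
    · intro k hk
      match k with
      | 0 => simp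
      | (k+1) =>
        rw [Function.iterate_succ_apply, hderiv]
        exact ih1 k (by omega)
    · rw [Function.iterate_succ_apply, hderiv, ih2]
      simp [hw, Nat.factorial_succ]
      ring

private lemma partial_hasDerivAt₁ {f : ℝ × ℝ → ℝ} (hf : Differentiable ℝ f) (s t : ℝ) :
    HasDerivAt (fun σ => f (σ, t)) (fderiv ℝ f (s, t) (1, 0)) s := by
  have h := ((hf (s, t)).hasFDerivAt).comp_hasDerivAt s
    ((hasDerivAt_id s).prodMk (hasDerivAt_const s t))
  simp at h; exact h

private lemma partial_hasDerivAt₂ {f : ℝ × ℝ → ℝ} (hf : Differentiable ℝ f) (s t : ℝ) :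
    HasDerivAt (fun τ => f (s, τ)) (fderiv ℝ f (s, t) (0, 1)) t := by
  have h := ((hf (s, t)).hasFDerivAt).comp_hasDerivAt t
    ((hasDerivAt_const t s).prodMk (hasDerivAt_id t))
  exact h

lemma swap_deriv : ∀ (k : ℕ) (f : ℝ × ℝ → ℝ), ContDiff ℝ ∞ f → ∀ s : ℝ,
    HasDerivAt (fun σ => deriv^[k] (fun τ => f (σ, τ)) 0)
      (deriv^[k] (fun τ => fderiv ℝ f (s, τ) (1, 0)) 0) s := by
  intro k
  induction k with
  | zero =>
    intro f hf s
    exact partial_hasDerivAt₁ (hf.differentiable (by norm_num)) s 0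
  | succ k ih =>
    intro f hf s
    have hfd : Differentiable ℝ f := hf.differentiable (by norm_num)
    have hfderiv : ContDiff ℝ ∞ (fderiv ℝ f) := hf.fderiv_right (by norm_num)
    have hfderiv_d : Differentiable ℝ (fderiv ℝ f) := hfderiv.differentiable (by norm_num)
    set g : ℝ × ℝ → ℝ := fun w => fderiv ℝ f w (0, 1) with hg
    set p : ℝ × ℝ → ℝ := fun w => fderiv ℝ f w (1, 0) with hp
    have hgc : ContDiff ℝ ∞ g := hfderiv.clm_apply contDiff_const
    have hpc : ContDiff ℝ ∞ p := hfderiv.clm_apply contDiff_const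
    have hpd : Differentiable ℝ p := hpc.differentiable (by norm_num)
    -- rewrite the function
    have hfun : ∀ σ, deriv^[k+1] (fun τ => f (σ, τ)) 0 = deriv^[k] (fun τ => g (σ, τ)) 0 := by
      intro σ
      rw [Function.iterate_succ_apply]
      have : (deriv fun τ => f (σ, τ)) = fun τ => g (σ, τ) :=
        funext fun τ => (partial_hasDerivAt₂ hfd σ τ).deriv
      rw [this]
    -- Schwarz: ∀ w, fderiv g w (1,0) = fderiv p w (0,1)
    have schwarz : ∀ w : ℝ × ℝ, fderiv ℝ g w (1, 0) = fderiv ℝ p w (0, 1) := by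
      intro w
      have hsym := second_derivative_symmetric (f := f) (f' := fderiv ℝ f)
        (f'' := fderiv ℝ (fderiv ℝ f) w) (fun y => (hfd y).hasFDerivAt)
        ((hfderiv_d w).hasFDerivAt)
      have e1 : fderiv ℝ g w = (fderiv ℝ (fderiv ℝ f) w).flip (0, 1) := by
        rw [hg]
        rw [fderiv_clm_apply (hfderiv_d w) (differentiableAt_const _)]
        simp
      have e2 : fderiv ℝ p w = (fderiv ℝ (fderiv ℝ f) w).flip (1, 0) := by
        rw [hp]
        rw [fderiv_clm_apply (hfderiv_d w) (differentiableAt_const _)]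
        simp
      rw [e1, e2]
      simpa using hsym (1, 0) (0, 1)
    -- target derivative value rewrite
    have hval : deriv^[k] (fun τ => fderiv ℝ g (s, τ) (1, 0)) 0
        = deriv^[k+1] (fun τ => p (s, τ)) 0 := by
      rw [Function.iterate_succ_apply]
      have : (deriv fun τ => p (s, τ)) = fun τ => fderiv ℝ g (s, τ) (1, 0) := by
        funext τ
        rw [(partial_hasDerivAt₂ hpd s τ).deriv]
        exact (schwarz (s, τ)).symm
      rw [this]
    have h := ih g hgc s
    rw [hval] at h
    have h2 : (fun σ => deriv^[k] (fun τ => g (σ, τ)) 0)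
        = fun σ => deriv^[k+1] (fun τ => f (σ, τ)) 0 := funext fun σ => (hfun σ).symm
    rw [h2] at h
    exact h

lemma jets {E : Type*} [NormedAddCommGroup E] [NormedSpace ℝ E]
    (F : E → ℝ) (hF : ContDiff ℝ ∞ F) (z₀ c d : E) (hc : fderiv ℝ F z₀ c = 1) (v : ℕ → ℝ) :
    ∀ M : ℕ, ∃ b : ℝ → ℝ, ContDiff ℝ ω b ∧ b 0 = 0 ∧
      ∀ k, 1 ≤ k → k ≤ M → deriv^[k] (fun t => F (z₀ + b t • c + t • d)) 0 = v k := by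
  intro M
  induction M with
  | zero => exact ⟨fun _ => 0, contDiff_const, rfl, fun k h1 h2 => by omega⟩
  | succ M ihM =>
    obtain ⟨b, hbω, hb0, hbk⟩ := ihM
    set j := M + 1 with hj
    have hbinf : ContDiff ℝ ∞ b := hbω.of_le le_top
    set ψ : ℝ × ℝ → E := fun w => z₀ + (b w.2 + w.1 * w.2 ^ j) • c + w.2 • d with hψdef
    have hψ : ContDiff ℝ ∞ ψ := by
      apply ContDiff.add
      apply ContDiff.add contDiff_const
      · exact ((hbinf.comp contDiff_snd).add (contDiff_fst.mul (contDiff_snd.pow j))).smul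
          contDiff_const
      · exact contDiff_snd.smul contDiff_const
    set h : ℝ × ℝ → ℝ := fun w => F (ψ w) with hhdef
    have hh : ContDiff ℝ ∞ h := hF.comp hψ
    have hhd : Differentiable ℝ h := hh.differentiable (by norm_num)
    have key : ∀ σ τ : ℝ, fderiv ℝ h (σ, τ) (1, 0) = τ ^ j * fderiv ℝ F (ψ (σ, τ)) c := by
      intro σ τ
      have hL := partial_hasDerivAt₁ hhd σ τ
      have h1 : HasDerivAt (fun σ' : ℝ => b τ + σ' * τ ^ j) (τ ^ j) σ := by
        have := (hasDerivAt_const σ (b τ)).add ((hasDerivAt_id σ).mul_const (τ ^ j))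
        simp only [zero_add, one_mul] at this; exact this
      have hcur : HasDerivAt (fun σ' : ℝ => ψ (σ', τ)) (τ ^ j • c) σ :=
        ((h1.smul_const c).const_add z₀).add_const (τ • d)
      have hR := ((hF.differentiable (by norm_num)) (ψ (σ, τ))).hasFDerivAt.comp_hasDerivAt σ hcur
      have := hL.unique hR
      rw [this, map_smul, smul_eq_mul]
    -- the u function
    have huc : ∀ s : ℝ, ContDiff ℝ ∞ (fun τ => fderiv ℝ F (ψ (s, τ)) c) := fun s =>
      ((hF.fderiv_right (by norm_num)).clm_apply contDiff_const).comp
        (hψ.comp (contDiff_const.prodMk contDiff_id))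
    have hu0 : ∀ s : ℝ, fderiv ℝ F (ψ (s, 0)) c = 1 := by
      intro s
      have : ψ (s, 0) = z₀ := by
        simp [hψdef, hb0, zero_pow (by omega : j ≠ 0)]
      rw [this, hc]
    set Nf : ℕ → ℝ → ℝ := fun k σ => deriv^[k] (fun τ => h (σ, τ)) 0 with hNf
    have hND : ∀ (k : ℕ) (s : ℝ), k ≤ M → HasDerivAt (Nf k) 0 s := by
      intro k s hk
      have h1 := swap_deriv k h hh s
      have h2 : (fun τ => fderiv ℝ h (s, τ) (1, 0))
          = fun τ => τ ^ j * fderiv ℝ F (ψ (s, τ)) c := funext fun τ => key s τ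
      rw [h2] at h1
      rw [(aux_pow_mul j _ (huc s)).1 k (by omega)] at h1
      exact h1
    have hNDj : ∀ s : ℝ, HasDerivAt (Nf j) (j.factorial : ℝ) s := by
      intro s
      have h1 := swap_deriv j h hh s
      have h2 : (fun τ => fderiv ℝ h (s, τ) (1, 0))
          = fun τ => τ ^ j * fderiv ℝ F (ψ (s, τ)) c := funext fun τ => key s τ
      rw [h2] at h1
      rw [(aux_pow_mul j _ (huc s)).2, hu0 s, mul_one] at h1
      exact h1
    -- constancy
    have hconst : ∀ (k : ℕ), k ≤ M → ∀ s : ℝ, Nf k s = Nf k 0 := by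
      intro k hk s
      exact is_const_of_deriv_eq_zero (fun x => (hND k x hk).differentiableAt)
        (fun x => (hND k x hk).deriv) s 0
    have haffine : ∀ s : ℝ, Nf j s = Nf j 0 + (j.factorial : ℝ) * s := by
      intro s
      have hD : ∀ x : ℝ, HasDerivAt (fun σ => Nf j σ - (j.factorial : ℝ) * σ) 0 x := by
        intro x
        have := (hNDj x).sub (by simpa using (hasDerivAt_id x).const_mul (j.factorial : ℝ))
        simp at this; exact this
      have := is_const_of_deriv_eq_zero (fun x => (hD x).differentiableAt)
        (fun x => (hD x).deriv) s 0
      simp only [mul_zero, sub_zero] at this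
      linarith [this]
    set s₀ : ℝ := (v j - Nf j 0) / (j.factorial : ℝ) with hs₀
    have hjfac : (j.factorial : ℝ) ≠ 0 := Nat.cast_ne_zero.mpr (Nat.factorial_ne_zero j)
    refine ⟨fun t => b t + s₀ * t ^ j, hbω.add (contDiff_const.mul (contDiff_id.pow j)), by
      simp [hb0, zero_pow (by omega : j ≠ 0)], ?_⟩
    intro k hk1 hk2
    have hfun : (fun t => F (z₀ + (b t + s₀ * t ^ j) • c + t • d)) = fun τ => h (s₀, τ) := rfl
    rw [hfun]
    rcases Nat.lt_or_ge k j with hkj | hkj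
    · -- k ≤ M
      have : Nf k s₀ = Nf k 0 := hconst k (by omega) s₀
      have h0 : Nf k 0 = v k := by
        have hfun0 : (fun τ => h (0, τ)) = fun t => F (z₀ + b t • c + t • d) := by
          funext τ; simp [hhdef, hψdef]
        rw [hNf] at *
        calc deriv^[k] (fun τ => h (0, τ)) 0 = deriv^[k] (fun t => F (z₀ + b t • c + t • d)) 0 := by
              rw [hfun0]
          _ = v k := hbk k hk1 (by omega)
      exact this.trans h0
    · have hkj' : k = j := by omega
      rw [hkj']
      show Nf j s₀ = v j
      rw [haffine s₀, hs₀, mul_div_cancel₀ _ hjfac]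
      ring



/-- The Hamiltonian vector field of `H : ℝⁿ × ℝⁿ → ℝ` on the standard symplectic phase
space `ℝⁿ × ℝⁿ`:  `X_H (q, p) = (∂H/∂p (q,p), -∂H/∂q (q,p))`, with the partial
derivatives expressed via the standard inner product (coordinatewise directional
derivatives). -/
noncomputable def hamVF {n : ℕ} (H : ((Fin n → ℝ) × (Fin n → ℝ)) → ℝ) :
    ((Fin n → ℝ) × (Fin n → ℝ)) → ((Fin n → ℝ) × (Fin n → ℝ)) :=
  fun z =>
    (fun i => fderiv ℝ H z (0, Pi.single i 1),
     fun i => -fderiv ℝ H z (Pi.single i 1, 0))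

/-- **Prescribing derivatives of a fixed function along trajectories of a constructed
Hamiltonian vector field** (core of the genericity theorem for Hamiltonians): if `F` is
smooth on phase space with `fderiv ℝ F z₀ ≠ 0`, then for every `m ≥ 1` and prescribed
values `v 1, …, v m`, there is a smooth Hamiltonian `H` with `X_H z₀ ≠ 0` such that
every integral curve `γ` of `X_H` near `0` with `γ 0 = z₀` satisfies
`deriv^[k] (F ∘ γ) 0 = v k` for all `1 ≤ k ≤ m`. -/
theorem exists_smooth_H_with_prescribed_derivs_of_F_along_trajectories
    {n : ℕ} (hn : 1 ≤ n)
    (F : ((Fin n → ℝ) × (Fin n → ℝ)) → ℝ) (hF : ContDiff ℝ (⊤ : ℕ∞) F)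
    (z₀ : (Fin n → ℝ) × (Fin n → ℝ)) (hdF : fderiv ℝ F z₀ ≠ 0)
    (m : ℕ) (hm : 1 ≤ m) (v : ℕ → ℝ) :
    ∃ H : ((Fin n → ℝ) × (Fin n → ℝ)) → ℝ, ContDiff ℝ (⊤ : ℕ∞) H ∧ hamVF H z₀ ≠ 0 ∧
      ∀ γ : ℝ → ((Fin n → ℝ) × (Fin n → ℝ)),
        (∀ᶠ t in nhds (0 : ℝ), HasDerivAt γ (hamVF H (γ t)) t) → γ 0 = z₀ →
        ∀ k, 1 ≤ k → k ≤ m → deriv^[k] (F ∘ γ) 0 = v k := by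
  -- choose a direction with derivative 1
  obtain ⟨w₀, hw₀⟩ : ∃ w, fderiv ℝ F z₀ w ≠ 0 := by
    by_contra hcon
    push_neg at hcon
    exact hdF (ContinuousLinearMap.ext fun w => by simp [hcon w])
  set c := (fderiv ℝ F z₀ w₀)⁻¹ • w₀ with hcdef
  have hc : fderiv ℝ F z₀ c = 1 := by
    rw [hcdef, map_smul, smul_eq_mul]
    exact inv_mul_cancel₀ hw₀
  have hcne : c ≠ 0 := by
    intro h
    rw [h, map_zero] at hc
    exact zero_ne_one hc
  set ct : (Fin n → ℝ) × (Fin n → ℝ) := (-c.2, c.1) with hctdef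
  have hctc : dotL ct c = 0 := by
    rw [dotL_apply]
    have h1 : ∑ i, ct.1 i * c.1 i = -∑ i, c.1 i * c.2 i := by
      rw [← Finset.sum_neg_distrib]
      exact Finset.sum_congr rfl fun i _ => by simp [hctdef]; ring
    have h2 : ∑ i, ct.2 i * c.2 i = ∑ i, c.1 i * c.2 i :=
      Finset.sum_congr rfl fun i _ => by simp [hctdef]
    rw [h1, h2]; ring
  have hκ : dotL ct ct ≠ 0 := by
    intro h0
    rw [dotL_apply] at h0
    have h1 : ∀ i ∈ Finset.univ, (0:ℝ) ≤ ct.1 i * ct.1 i := fun i _ => mul_self_nonneg _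
    have h2 : ∀ i ∈ Finset.univ, (0:ℝ) ≤ ct.2 i * ct.2 i := fun i _ => mul_self_nonneg _
    have hs1 : (0:ℝ) ≤ ∑ i, ct.1 i * ct.1 i := Finset.sum_nonneg h1
    have hs2 : (0:ℝ) ≤ ∑ i, ct.2 i * ct.2 i := Finset.sum_nonneg h2
    have he1 : ∑ i, ct.1 i * ct.1 i = 0 := by linarith
    have he2 : ∑ i, ct.2 i * ct.2 i = 0 := by linarith
    have hz1 := (Finset.sum_eq_zero_iff_of_nonneg h1).mp he1
    have hz2 := (Finset.sum_eq_zero_iff_of_nonneg h2).mp he2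
    apply hcne
    have hc1 : c.1 = 0 := funext fun i => by
      have := hz2 i (Finset.mem_univ i)
      simpa [hctdef, mul_self_eq_zero] using this
    have hc2 : c.2 = 0 := funext fun i => by
      have := hz1 i (Finset.mem_univ i)
      simpa [hctdef, mul_self_eq_zero] using this
    exact Prod.ext hc1 hc2
  set r : ℝ := (dotL ct ct)⁻¹ with hrdef
  set d := r • ct with hddef
  set dt : (Fin n → ℝ) × (Fin n → ℝ) := (-r) • c with hdtdef
  have hctd : dotL ct d = 1 := by
    rw [hddef, map_smul, smul_eq_mul, hrdef]
    exact inv_mul_cancel₀ hκ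
  -- the jet function
  obtain ⟨b, hbω, hb0, hbk⟩ := jets F (hF.of_le (by simp)) z₀ c d hc v m
  have hbdiff : Differentiable ℝ b := hbω.differentiable (by norm_num)
  set H : ((Fin n → ℝ) × (Fin n → ℝ)) → ℝ :=
    fun z => b (dotL ct z - dotL ct z₀) + dotL dt z with hHdef
  have hHcont : ContDiff ℝ (⊤ : ℕ∞) H :=
    ((hbω.comp (((dotL ct).contDiff).sub contDiff_const)).add (dotL dt).contDiff).of_le le_top
  -- formula for hamVF H
  have hamEq : ∀ z, hamVF H z = deriv b (dotL ct z - dotL ct z₀) • c + d := by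
    intro z
    have hσ : HasFDerivAt (fun z => dotL ct z - dotL ct z₀) (dotL ct) z :=
      ((dotL ct).hasFDerivAt).sub_const _
    have hb' : HasDerivAt b (deriv b (dotL ct z - dotL ct z₀)) (dotL ct z - dotL ct z₀) :=
      (hbdiff _).hasDerivAt
    have hH : HasFDerivAt H (deriv b (dotL ct z - dotL ct z₀) • (dotL ct) + dotL dt) z :=
      (hb'.comp_hasFDerivAt z hσ).add ((dotL dt).hasFDerivAt)
    have hfd := hH.fderiv
    refine Prod.ext (funext fun i => ?_) (funext fun i => ?_)
    · show fderiv ℝ H z (0, Pi.single i 1) = _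
      rw [hfd]
      simp only [ContinuousLinearMap.add_apply, ContinuousLinearMap.coe_smul',
        Pi.smul_apply, smul_eq_mul, dotL_single2]
      simp only [hddef, hdtdef, hctdef, Prod.fst_add, Pi.add_apply, Prod.smul_fst,
        Prod.smul_snd, Pi.smul_apply, Pi.neg_apply, smul_eq_mul]
      ring
    · show -(fderiv ℝ H z (Pi.single i 1, 0)) = _
      rw [hfd]
      simp only [ContinuousLinearMap.add_apply, ContinuousLinearMap.coe_smul',
        Pi.smul_apply, smul_eq_mul, dotL_single1]
      simp only [hddef, hdtdef, hctdef, Prod.snd_add, Pi.add_apply, Prod.smul_fst,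
        Prod.smul_snd, Pi.smul_apply, Pi.neg_apply, smul_eq_mul]
      ring
  have hamct : ∀ z, dotL ct (hamVF H z) = 1 := by
    intro z
    rw [hamEq z, map_add, map_smul, hctc, hctd, smul_eq_mul]
    ring
  refine ⟨H, hHcont, ?_, ?_⟩
  · intro h0
    have h1 := hamct z₀
    rw [h0, map_zero] at h1
    exact zero_ne_one h1
  · intro γ hγ hγ0
    obtain ⟨ε, hε, hball⟩ := Metric.eventually_nhds_iff_ball.mp hγ
    -- step 1 : the clock
    have hσconst : ∀ t ∈ Metric.ball (0:ℝ) ε, dotL ct (γ t) - dotL ct z₀ = t := by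
      intro t ht
      have hder : ∀ u ∈ Metric.ball (0:ℝ) ε,
          HasDerivAt (fun u => dotL ct (γ u) - dotL ct z₀ - u) 0 u := by
        intro u hu
        have h1 : HasDerivAt (fun u => dotL ct (γ u)) (dotL ct (hamVF H (γ u))) u :=
          ((dotL ct).hasFDerivAt).comp_hasDerivAt u (hball u hu)
        have h2 := (h1.sub_const (dotL ct z₀)).sub (hasDerivAt_id u)
        rw [hamct (γ u)] at h2
        simp at h2; exact h2
      have := const_of_deriv0_ball hε hder ht
      simp [hγ0] at this
      linarith
    -- step 2 : the trajectory
    have hγeq : ∀ t ∈ Metric.ball (0:ℝ) ε, γ t = z₀ + b t • c + t • d := by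
      intro t ht
      have hder : ∀ u ∈ Metric.ball (0:ℝ) ε,
          HasDerivAt (fun u => γ u - (z₀ + b u • c + u • d)) 0 u := by
        intro u hu
        have h1 : HasDerivAt γ (deriv b u • c + d) u := by
          have h := hball u hu
          rwa [hamEq (γ u), hσconst u hu] at h
        have hb' : HasDerivAt b (deriv b u) u := (hbdiff u).hasDerivAt
        have h2 : HasDerivAt (fun u => z₀ + b u • c + u • d) (deriv b u • c + d) u := by
          have h3 := ((hb'.smul_const c).const_add z₀).add ((hasDerivAt_id u).smul_const d)
          simp at h3; exact h3
        have h4 := h1.sub h2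
        simp at h4; exact h4
      have h5 := const_of_deriv0_ball hε hder ht
      beta_reduce at h5
      rw [hγ0, hb0] at h5
      simp only [zero_smul, add_zero, sub_self] at h5
      exact sub_eq_zero.mp h5
    have hev : (F ∘ γ) =ᶠ[nhds (0:ℝ)] fun t => F (z₀ + b t • c + t • d) := by
      filter_upwards [Metric.ball_mem_nhds (0:ℝ) hε] with t ht
      simp only [Function.comp_apply, hγeq t ht]
    exact fun k hk1 hk2 => (iter_deriv_congr k hev).trans (hbk k hk1 hk2)
end
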